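/- Let p, q, r, s ∈ [1,∞] and A = (α₀, α_∞), B = (β₀, β_∞) ∈ ℝ² be such that (p,q,A) and (r,s,B) are admissible Lorentz–Zygmund parameters. If p < r, then lim_{a→∞} sup{ ‖f^* χ_{(a,∞)}‖_{L^{r,s,B}(0,∞)} : f measurable on (0,∞), ‖f‖_{L^{p,q,A}(0,∞)} ≤ 1 } = 0. -/

import Mathlib

open MeasureTheory Set Filter Topology
open scoped ENNReal NNReal

noncomputable section

/-- The nonincreasing rearrangement of an `ℝ≥0∞`-valued function with respect to `μ`:
`f^*(t) = inf {λ : μ({f > λ}) ≤ t}`. -/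
def rearr {α : Type*} [MeasurableSpace α] (μ : Measure α) (f : α → ℝ≥0∞) (t : ℝ) : ℝ≥0∞ :=
  sInf {l : ℝ≥0∞ | μ {x | l < f x} ≤ ENNReal.ofReal t}

/-- Lebesgue measure on `(0,∞)`. -/
def μI : Measure ℝ := volume.restrict (Set.Ioi (0 : ℝ))

/-- `ℓ(t) = 1 + |log t|`. -/
def ell (t : ℝ) : ℝ := 1 + |Real.log t|

/-- The broken-logarithm power `ℓ^A(t)`, equal to `ℓ(t)^{α₀}` for `t ≤ 1` and to
`ℓ(t)^{α_∞}` for `t > 1`, where `A = (α₀, α_∞)`. -/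
def ellA (A : ℝ × ℝ) (t : ℝ) : ℝ := if t ≤ 1 then ell t ^ A.1 else ell t ^ A.2

/-- The `L^q(0,∞)` norm (with `q ∈ [1,∞]`) of a nonnegative function. -/
def lqNorm (q : ℝ≥0∞) (g : ℝ → ℝ≥0∞) : ℝ≥0∞ :=
  if q = ∞ then essSup g μI
  else (∫⁻ t in Set.Ioi (0 : ℝ), g t ^ q.toReal) ^ q.toReal⁻¹

/-- The Lorentz–Zygmund functional
`‖f‖_{L^{p,q,A}(0,∞)} = ‖ t^{1/p - 1/q} ℓ^A(t) f^*(t) ‖_{L^q(0,∞)}`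
(with the conventions `1/∞ = 0`). -/
def lzNorm (p q : ℝ≥0∞) (A : ℝ × ℝ) (f : ℝ → ℝ≥0∞) : ℝ≥0∞ :=
  lqNorm q fun t => ENNReal.ofReal (t ^ (p.toReal⁻¹ - q.toReal⁻¹) * ellA A t) * rearr μI f t

/-- Admissibility of Lorentz–Zygmund parameters: the functional `‖·‖_{L^{p,q,A}}` is
equivalent to a rearrangement-invariant norm. -/
def LZAdmissible (p q : ℝ≥0∞) (A : ℝ × ℝ) : Prop :=
  (p = 1 ∧ q = 1 ∧ 0 ≤ A.1 ∧ A.2 ≤ 0) ∨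
  (1 < p ∧ p < ∞ ∧ 1 ≤ q) ∨
  (p = ∞ ∧ 1 ≤ q ∧ q < ∞ ∧ A.1 + q.toReal⁻¹ < 0) ∨
  (p = ∞ ∧ q = ∞ ∧ A.1 ≤ 0)

/-!
A function in the unit ball of `L^{p,q,A}` satisfies `f^*(t) ≲ t^{-m}` for `t ≥ 2` and every
`m < 1/p`: the `L^q`-norm of the weight times `f^*` over `(t/2, t)` is at least `f^*(t)` times
the size of the weight there. Hence `(f^* χ_{(a,∞)})^*(u) ≲ (a + u)^{-m}`, and writing
`m = η + κ` with `κ > 1/r` gives `(a + u)^{-m} ≤ a^{-η} max(1, u)^{-κ}`. The `L^{r,s,B}` weight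
times `max(1, u)^{-κ}` is dominated by `u^{-1/s} ℓ(u)^β` for some `β`, and admissibility of
`(r, s, B)` lets `β` be chosen so that this function lies in `L^s(0,∞)`. So the tail norm is
`O(a^{-η})` uniformly on the unit ball.
-/

lemma one_le_ell (t : ℝ) : 1 ≤ ell t :=
  le_add_of_nonneg_right (abs_nonneg _)

lemma ell_pos (t : ℝ) : 0 < ell t :=
  one_pos.trans_le (one_le_ell t)

lemma ellA_pos (A : ℝ × ℝ) (t : ℝ) : 0 < ellA A t := by
  unfold ellA
  split_ifs <;> exact Real.rpow_pos_of_pos (ell_pos t) _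

lemma ell_inv (t : ℝ) : ell t⁻¹ = ell t := by
  rw [ell, ell, Real.log_inv, abs_neg]

lemma ell_exp (x : ℝ) : ell (Real.exp x) = 1 + |x| := by
  rw [ell, Real.log_exp]

lemma exists_ell_rpow_le (β : ℝ) {ε : ℝ} (hε : 0 < ε) :
    ∃ C > 0, ∀ t : ℝ, 1 ≤ t → ell t ^ β ≤ C * t ^ ε := by
  rcases le_or_gt β 0 with hβ | hβ
  · refine ⟨1, one_pos, fun t ht => ?_⟩
    rw [one_mul]
    exact (Real.rpow_le_one_of_one_le_of_nonpos (one_le_ell t) hβ).trans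
      (Real.one_le_rpow ht hε.le)
  set a := ε / β
  have ha : 0 < a := div_pos hε hβ
  refine ⟨(1 + a⁻¹) ^ β, by positivity, fun t ht => ?_⟩
  have ht0 : 0 ≤ t := zero_le_one.trans ht
  have hell : ell t ≤ (1 + a⁻¹) * t ^ a := by
    have hlog := Real.log_le_rpow_div ht0 ha
    have h1 := Real.one_le_rpow ht ha.le
    rw [ell, abs_of_nonneg (Real.log_nonneg ht), div_eq_mul_inv] at *
    nlinarith [inv_pos.2 ha]
  calc ell t ^ β ≤ ((1 + a⁻¹) * t ^ a) ^ β := Real.rpow_le_rpow (ell_pos t).le hell hβ.le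
    _ = (1 + a⁻¹) ^ β * t ^ ε := by
      rw [Real.mul_rpow (by positivity) (by positivity), ← Real.rpow_mul ht0,
        div_mul_cancel₀ ε hβ.ne']

lemma exists_mul_rpow_neg_le_ell_rpow (β : ℝ) {ε : ℝ} (hε : 0 < ε) :
    ∃ c > 0, ∀ t : ℝ, 1 ≤ t → c * t ^ (-ε) ≤ ell t ^ β := by
  obtain ⟨C, hC, h⟩ := exists_ell_rpow_le (-β) hε
  refine ⟨C⁻¹, inv_pos.2 hC, fun t ht => ?_⟩
  have ht0 : 0 < t := one_pos.trans_le ht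
  have := inv_anti₀ (Real.rpow_pos_of_pos (ell_pos t) _) (h t ht)
  rwa [Real.rpow_neg (ell_pos t).le, inv_inv, mul_inv, ← Real.rpow_neg ht0.le] at this

lemma exists_ell_rpow_le_of_le_one (β : ℝ) {ε : ℝ} (hε : 0 < ε) :
    ∃ C > 0, ∀ t ∈ Ioc (0 : ℝ) 1, ell t ^ β ≤ C * t ^ (-ε) := by
  obtain ⟨C, hC, h⟩ := exists_ell_rpow_le β hε
  refine ⟨C, hC, fun t ht => ?_⟩
  simpa [ell_inv, Real.inv_rpow ht.1.le, Real.rpow_neg ht.1.le] using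
    h t⁻¹ (one_le_inv₀ ht.1 |>.2 ht.2)

lemma exists_rpow_mul_ell_rpow_le_of_one_le (α β : ℝ) {γ : ℝ} (hγ : γ < 0) :
    ∃ C > 0, ∀ u : ℝ, 1 ≤ u → u ^ γ * ell u ^ α ≤ C * ell u ^ β := by
  obtain ⟨C, hC, h⟩ := exists_ell_rpow_le (α - β) (neg_pos.2 hγ)
  refine ⟨C, hC, fun u hu => ?_⟩
  have hu0 : 0 < u := one_pos.trans_le hu
  have := ell_pos u
  calc u ^ γ * ell u ^ α = u ^ γ * ell u ^ (α - β) * ell u ^ β := by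
        rw [mul_assoc, ← Real.rpow_add (ell_pos u), sub_add_cancel]
    _ ≤ u ^ γ * (C * u ^ (-γ)) * ell u ^ β := by gcongr; exact h u hu
    _ = C * ell u ^ β := by
        rw [mul_left_comm, ← Real.rpow_add hu0, add_neg_cancel, Real.rpow_zero, mul_one]

lemma lintegral_inv_mul_ell_rpow_lt_top {c : ℝ} (hc : c < -1) :
    ∫⁻ u in Ioi 0, ENNReal.ofReal (u⁻¹ * ell u ^ c) < ⊤ := by
  -- substitute `u = exp x`: the integral becomes `∫ (1 + |x|) ^ c dx` over `ℝ`
  rw [← Real.range_exp, ← image_univ, lintegral_image_eq_lintegral_abs_deriv_mul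
    MeasurableSet.univ (fun x _ => (Real.hasDerivAt_exp x).hasDerivWithinAt)
    Real.exp_injective.injOn, Measure.restrict_univ]
  have hint : Integrable (fun x : ℝ => (1 + ‖x‖) ^ (-(-c))) :=
    integrable_one_add_norm (by rw [Module.finrank_self, Nat.cast_one]; linarith)
  refine lt_of_eq_of_lt (lintegral_congr fun x => ?_) hint.lintegral_lt_top
  rw [← ENNReal.ofReal_mul (abs_nonneg _), abs_of_pos (Real.exp_pos x), ← mul_assoc,
    mul_inv_cancel₀ (Real.exp_pos x).ne', one_mul, ell_exp, neg_neg, Real.norm_eq_abs]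

lemma rpow_neg_add_le {u a η κ : ℝ} (hu : 0 < u) (ha : 1 ≤ a) (hη : 0 ≤ η) (hκ : 0 ≤ κ) :
    (u + a) ^ (-(η + κ)) ≤ a ^ (-η) * max 1 u ^ (-κ) := by
  have ha0 : 0 < a := one_pos.trans_le ha
  rw [neg_add, Real.rpow_add (by linarith)]
  exact mul_le_mul (Real.rpow_le_rpow_of_nonpos ha0 (by linarith) (by linarith))
    (Real.rpow_le_rpow_of_nonpos (by positivity) (max_le (by linarith) (by linarith))
      (by linarith)) (by positivity) (by positivity)

lemma mul_rpow_le_rpow_of_half_le {t u : ℝ} (x : ℝ) (ht : 0 < t) (htu : t / 2 ≤ u) (hut : u ≤ t) :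
    2 ^ (-|x|) * t ^ x ≤ u ^ x := by
  rcases le_or_gt 0 x with hx | hx
  · calc 2 ^ (-|x|) * t ^ x = (t / 2) ^ x := by
          rw [abs_of_nonneg hx, Real.div_rpow ht.le zero_le_two, Real.rpow_neg zero_le_two,
            inv_mul_eq_div]
      _ ≤ u ^ x := Real.rpow_le_rpow (by positivity) htu hx
  · calc 2 ^ (-|x|) * t ^ x ≤ 1 * t ^ x := by
          gcongr
          exact Real.rpow_le_one_of_one_le_of_nonpos one_le_two (neg_nonpos.2 (abs_nonneg x))
      _ ≤ u ^ x := by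
          rw [one_mul]
          exact Real.rpow_le_rpow_of_nonpos (by linarith) hut hx.le

lemma lqNorm_mono (q : ℝ≥0∞) {g h : ℝ → ℝ≥0∞} (hgh : ∀ t ∈ Ioi (0 : ℝ), g t ≤ h t) :
    lqNorm q g ≤ lqNorm q h := by
  have hae : ∀ᵐ t ∂μI, g t ≤ h t := ae_restrict_of_forall_mem measurableSet_Ioi hgh
  unfold lqNorm
  split_ifs
  · exact essSup_mono_ae hae
  · gcongr ?_ ^ _
    exact lintegral_mono_ae (hae.mono fun t ht => by gcongr)

lemma lqNorm_const_mul {q : ℝ≥0∞} (hq : q ≠ 0) {c : ℝ≥0∞} (hc : c ≠ ⊤) (g : ℝ → ℝ≥0∞) :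
    lqNorm q (fun t => c * g t) = c * lqNorm q g := by
  unfold lqNorm
  split_ifs with hqt
  · exact ENNReal.essSup_const_mul
  have hq0 : 0 < q.toReal := ENNReal.toReal_pos hq hqt
  simp_rw [ENNReal.mul_rpow_of_nonneg _ _ hq0.le]
  rw [lintegral_const_mul' _ _ (ENNReal.rpow_ne_top_of_nonneg hq0.le hc),
    ENNReal.mul_rpow_of_nonneg _ _ (inv_nonneg.2 hq0.le), ← ENNReal.rpow_mul,
    mul_inv_cancel₀ hq0.ne', ENNReal.rpow_one]

lemma le_lqNorm_of_le_on_Ioo {q : ℝ≥0∞} (hq : q ≠ 0) {g : ℝ → ℝ≥0∞} {c : ℝ≥0∞} {x y : ℝ}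
    (hx : 0 ≤ x) (hxy : x < y) (hc : ∀ u ∈ Ioo x y, c ≤ g u) :
    c * ENNReal.ofReal ((y - x) ^ q.toReal⁻¹) ≤ lqNorm q g := by
  unfold lqNorm
  split_ifs with hqt
  · rw [hqt, ENNReal.toReal_top, inv_zero, Real.rpow_zero, ENNReal.ofReal_one, mul_one]
    by_contra! hlt
    have hae : ∀ᵐ u ∂volume.restrict (Ioo x y), g u < c :=
      ae_restrict_of_ae_restrict_of_subset (fun u hu => hx.trans_lt hu.1) (ae_lt_of_essSup_lt hlt)
    have : (ae (volume.restrict (Ioo x y))).NeBot := ae_neBot.2 (by simp [hxy])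
    obtain ⟨u, hu, hgu⟩ := (hae.and (ae_restrict_mem measurableSet_Ioo)).exists
    exact (hc u hgu).not_gt hu
  have hq0 : 0 < q.toReal := ENNReal.toReal_pos hq hqt
  calc c * ENNReal.ofReal ((y - x) ^ q.toReal⁻¹)
      = (c ^ q.toReal * ENNReal.ofReal (y - x)) ^ q.toReal⁻¹ := by
        rw [ENNReal.mul_rpow_of_nonneg _ _ (inv_nonneg.2 hq0.le), ← ENNReal.rpow_mul,
          mul_inv_cancel₀ hq0.ne', ENNReal.rpow_one,
          ENNReal.ofReal_rpow_of_nonneg (by linarith) (inv_nonneg.2 hq0.le)]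
    _ ≤ (∫⁻ u in Ioo x y, g u ^ q.toReal) ^ q.toReal⁻¹ := by
        rw [← Real.volume_Ioo, ← setLIntegral_const]
        gcongr ?_ ^ _
        exact setLIntegral_mono' measurableSet_Ioo fun u hu => by gcongr; exact hc u hu
    _ ≤ (∫⁻ u in Ioi 0, g u ^ q.toReal) ^ q.toReal⁻¹ := by
        gcongr ?_ ^ _
        exact lintegral_mono_set fun u hu => hx.trans_lt hu.1

lemma lqNorm_rpow_mul_ell_rpow_lt_top {s : ℝ≥0∞} (hs : s ≠ 0) {β : ℝ}
    (hβ : (s ≠ ∞ ∧ β + s.toReal⁻¹ < 0) ∨ (s = ∞ ∧ β ≤ 0)) :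
    lqNorm s (fun u => ENNReal.ofReal (u ^ (-s.toReal⁻¹) * ell u ^ β)) < ⊤ := by
  rcases hβ with ⟨hst, hβ⟩ | ⟨rfl, hβ⟩
  · have hs0 : 0 < s.toReal := ENNReal.toReal_pos hs hst
    rw [lqNorm, if_neg hst]
    refine ENNReal.rpow_lt_top_of_nonneg (inv_nonneg.2 hs0.le) (ne_of_lt ?_)
    have hc : β * s.toReal < -1 := by
      have := mul_neg_of_neg_of_pos hβ hs0
      rw [add_mul, inv_mul_cancel₀ hs0.ne'] at this
      linarith
    refine lt_of_eq_of_lt (setLIntegral_congr_fun measurableSet_Ioi fun u (hu : 0 < u) => ?_)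
      (lintegral_inv_mul_ell_rpow_lt_top hc)
    have := ell_pos u
    rw [ENNReal.ofReal_rpow_of_nonneg (by positivity) hs0.le,
      Real.mul_rpow (by positivity) (Real.rpow_nonneg (ell_pos u).le _), ← Real.rpow_mul hu.le,
      ← Real.rpow_mul (ell_pos u).le, neg_mul, inv_mul_cancel₀ hs0.ne', Real.rpow_neg_one]
  · rw [lqNorm, if_pos rfl]
    refine (essSup_le_of_ae_le 1 (ae_of_all _ fun u => ?_)).trans_lt ENNReal.one_lt_top
    simp only [ENNReal.toReal_top, inv_zero, neg_zero, Real.rpow_zero, one_mul]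
    exact ENNReal.ofReal_le_one.2 (Real.rpow_le_one_of_one_le_of_nonpos (one_le_ell u) hβ)

lemma rearr_antitone {α : Type*} [MeasurableSpace α] (μ : Measure α) (f : α → ℝ≥0∞) :
    Antitone (rearr μ f) :=
  fun _ _ hts => sInf_le_sInf fun _ hl => hl.trans (ENNReal.ofReal_le_ofReal hts)

lemma rearr_indicator_Ioi_le {g φ : ℝ → ℝ≥0∞} {a u : ℝ} (hφ : AntitoneOn φ (Ioi a))
    (hg : ∀ x > a, g x ≤ φ x) (hu : 0 < u) :
    rearr μI ((Ioi a).indicator g) u ≤ φ (a + u) := by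
  refine sInf_le ?_
  have hsub : {x | φ (a + u) < (Ioi a).indicator g x} ⊆ Ioo a (a + u) := by
    intro x hx
    by_cases hxa : x ∈ Ioi a
    · rw [mem_ofPred_eq, indicator_of_mem hxa] at hx
      refine ⟨hxa, lt_of_not_ge fun hax => ?_⟩
      exact (hx.trans_le (hg x hxa)).not_ge (hφ (by simpa using hu) hxa hax)
    · rw [mem_ofPred_eq, indicator_of_notMem hxa] at hx
      exact absurd hx not_lt_zero
  calc μI {x | φ (a + u) < (Ioi a).indicator g x} ≤ volume (Ioo a (a + u)) :=
        (Measure.restrict_le_self _).trans (measure_mono hsub)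
    _ = ENNReal.ofReal u := by rw [Real.volume_Ioo, add_sub_cancel_left]

namespace LZAdmissible

variable {p q : ℝ≥0∞} {A : ℝ × ℝ}

lemma one_le_left (h : LZAdmissible p q A) : 1 ≤ p := by
  rcases h with ⟨rfl, -⟩ | ⟨hp, -⟩ | ⟨rfl, -⟩ | ⟨rfl, -⟩
  exacts [le_rfl, hp.le, le_top, le_top]

lemma one_le_right (h : LZAdmissible p q A) : 1 ≤ q := by
  rcases h with ⟨-, rfl, -⟩ | ⟨-, -, hq⟩ | ⟨-, hq, -⟩ | ⟨-, rfl, -⟩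
  exacts [le_rfl, hq, hq, le_top]

lemma of_left_eq_top (h : LZAdmissible ∞ q A) :
    (q ≠ ∞ ∧ A.1 + q.toReal⁻¹ < 0) ∨ (q = ∞ ∧ A.1 ≤ 0) := by
  rcases h with ⟨h, -⟩ | ⟨-, h, -⟩ | ⟨-, -, hq, hA⟩ | ⟨-, hq, hA⟩
  · exact absurd h ENNReal.top_ne_one
  · exact absurd h (lt_irrefl ∞)
  · exact Or.inl ⟨hq.ne, hA⟩
  · exact Or.inr ⟨hq, hA⟩

lemma exists_rpow_mul_ell_rpow_le_of_le_one (h : LZAdmissible p q A) :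
    ∃ β, ((q ≠ ∞ ∧ β + q.toReal⁻¹ < 0) ∨ (q = ∞ ∧ β ≤ 0)) ∧
      ∃ C > 0, ∀ u ∈ Ioc (0 : ℝ) 1, u ^ p.toReal⁻¹ * ell u ^ A.1 ≤ C * ell u ^ β := by
  by_cases hp : p = ∞
  · subst hp
    refine ⟨A.1, h.of_left_eq_top, 1, one_pos, fun u _ => ?_⟩
    simp
  -- for `p < ∞` the power `u ^ (1 / p)` absorbs any power of `ell u`
  refine ⟨-2, ?_, ?_⟩
  · rcases eq_or_ne q ∞ with hq | hq
    · exact Or.inr ⟨hq, by norm_num⟩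
    · refine Or.inl ⟨hq, ?_⟩
      have : 1 ≤ q.toReal := by simpa using ENNReal.toReal_mono hq h.one_le_right
      have : q.toReal⁻¹ ≤ 1 := inv_le_one_of_one_le₀ this
      linarith
  have hp0 : 0 < p.toReal⁻¹ :=
    inv_pos.2 (ENNReal.toReal_pos (one_pos.trans_le h.one_le_left).ne' hp)
  obtain ⟨C, hC, hC'⟩ := exists_ell_rpow_le_of_le_one (A.1 + 2) hp0
  refine ⟨C, hC, fun u hu => ?_⟩
  have := ell_pos u
  have := hu.1
  calc u ^ p.toReal⁻¹ * ell u ^ A.1 = u ^ p.toReal⁻¹ * ell u ^ (A.1 + 2) * ell u ^ (-2 : ℝ) := by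
        rw [mul_assoc, ← Real.rpow_add (ell_pos u), add_neg_cancel_right]
    _ ≤ u ^ p.toReal⁻¹ * (C * u ^ (-p.toReal⁻¹)) * ell u ^ (-2 : ℝ) := by gcongr; exact hC' u hu
    _ = C * ell u ^ (-2 : ℝ) := by
        rw [mul_left_comm, ← Real.rpow_add hu.1, add_neg_cancel, Real.rpow_zero, mul_one]

lemma exists_weight_mul_le (h : LZAdmissible p q A) {κ : ℝ} (hκ : p.toReal⁻¹ < κ) :
    ∃ β C : ℝ, ((q ≠ ∞ ∧ β + q.toReal⁻¹ < 0) ∨ (q = ∞ ∧ β ≤ 0)) ∧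
      ∀ u > 0, u ^ (p.toReal⁻¹ - q.toReal⁻¹) * ellA A u * max 1 u ^ (-κ)
        ≤ C * (u ^ (-q.toReal⁻¹) * ell u ^ β) := by
  obtain ⟨β, hβ, C₀, hC₀, h₀⟩ := h.exists_rpow_mul_ell_rpow_le_of_le_one
  obtain ⟨C₁, hC₁, h₁⟩ :=
    exists_rpow_mul_ell_rpow_le_of_one_le A.2 β (sub_neg.2 hκ : p.toReal⁻¹ - κ < 0)
  refine ⟨β, max C₀ C₁, hβ, fun u hu => ?_⟩
  have hell := Real.rpow_nonneg (ell_pos u).le β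
  suffices u ^ p.toReal⁻¹ * ellA A u * max 1 u ^ (-κ) ≤ max C₀ C₁ * ell u ^ β by
    rw [sub_eq_add_neg, Real.rpow_add hu]
    calc u ^ p.toReal⁻¹ * u ^ (-q.toReal⁻¹) * ellA A u * max 1 u ^ (-κ)
        = u ^ (-q.toReal⁻¹) * (u ^ p.toReal⁻¹ * ellA A u * max 1 u ^ (-κ)) := by ring
      _ ≤ u ^ (-q.toReal⁻¹) * (max C₀ C₁ * ell u ^ β) := by gcongr
      _ = _ := by ring
  rcases le_or_gt u 1 with hu1 | hu1
  · rw [ellA, if_pos hu1, max_eq_left hu1, Real.one_rpow, mul_one]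
    exact (h₀ u ⟨hu, hu1⟩).trans (by gcongr; exact le_max_left _ _)
  · rw [ellA, if_neg hu1.not_ge, max_eq_right hu1.le, mul_right_comm, ← Real.rpow_add hu,
      ← sub_eq_add_neg]
    exact (h₁ u hu1.le).trans (by gcongr; exact le_max_right _ _)

end LZAdmissible

lemma exists_rearr_le_of_lzNorm_le_one (p : ℝ≥0∞) {q : ℝ≥0∞} (hq : q ≠ 0) (A : ℝ × ℝ) {m : ℝ}
    (hm : m < p.toReal⁻¹) :
    ∃ C > 0, ∀ f : ℝ → ℝ≥0∞, lzNorm p q A f ≤ 1 →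
      ∀ t : ℝ, 2 ≤ t → rearr μI f t ≤ ENNReal.ofReal (C * t ^ (-m)) := by
  set e := p.toReal⁻¹ - q.toReal⁻¹
  set δ := p.toReal⁻¹ - m
  obtain ⟨c, hc, hcb⟩ := exists_mul_rpow_neg_le_ell_rpow A.2 (sub_pos.2 hm : 0 < δ)
  set c' := c * 2 ^ (-|e - δ|)
  have hweight : ∀ t u : ℝ, 2 ≤ t → u ∈ Ioo (t / 2) t → c' * t ^ (e - δ) ≤ u ^ e * ellA A u := by
    intro t u ht hu
    have hu1 : 1 < u := by linarith [hu.1]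
    have hu0 : 0 < u := one_pos.trans hu1
    rw [ellA, if_neg hu1.not_ge]
    calc c' * t ^ (e - δ) = c * (2 ^ (-|e - δ|) * t ^ (e - δ)) := mul_assoc _ _ _
      _ ≤ c * u ^ (e - δ) := by
          gcongr
          exact mul_rpow_le_rpow_of_half_le _ (by linarith) hu.1.le hu.2.le
      _ = u ^ e * (c * u ^ (-δ)) := by rw [Real.rpow_sub hu0, Real.rpow_neg hu0.le]; ring
      _ ≤ u ^ e * ell u ^ A.2 := by gcongr; exact hcb u hu1.le
  refine ⟨(c' / 2 ^ q.toReal⁻¹)⁻¹, by positivity, fun f hf t ht => ?_⟩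
  have ht0 : 0 < t := by linarith
  have hX : c' * t ^ (e - δ) * (t - t / 2) ^ q.toReal⁻¹ = c' / 2 ^ q.toReal⁻¹ * t ^ m := by
    rw [sub_half, Real.div_rpow ht0.le zero_le_two, mul_div_assoc', mul_assoc,
      ← Real.rpow_add ht0, show e - δ + q.toReal⁻¹ = m by ring]
    ring
  have hX0 : 0 < c' / 2 ^ q.toReal⁻¹ * t ^ m := by positivity
  have hlow := (le_lqNorm_of_le_on_Ioo hq (by linarith) (by linarith : t / 2 < t)
    fun u hu => mul_le_mul' (ENNReal.ofReal_le_ofReal (hweight t u ht hu))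
      (rearr_antitone μI f hu.2.le)).trans hf
  rw [mul_right_comm, ← ENNReal.ofReal_mul (by positivity), hX, mul_comm,
    ← ENNReal.le_inv_iff_mul_le, ← ENNReal.ofReal_inv_of_pos hX0] at hlow
  rwa [mul_inv, ← Real.rpow_neg ht0.le] at hlow

lemma lzNorm_indicator_Ioi_rearr_le {r s : ℝ≥0∞} (hs : s ≠ 0) (B : ℝ × ℝ) {f : ℝ → ℝ≥0∞}
    {a η κ β C₁ C₂ : ℝ} (ha : 1 ≤ a) (hη : 0 ≤ η) (hκ : 0 ≤ κ) (hC₁ : 0 ≤ C₁)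
    (hf : ∀ t > a, rearr μI f t ≤ ENNReal.ofReal (C₁ * t ^ (-(η + κ))))
    (hw : ∀ u > 0, u ^ (r.toReal⁻¹ - s.toReal⁻¹) * ellA B u * max 1 u ^ (-κ)
        ≤ C₂ * (u ^ (-s.toReal⁻¹) * ell u ^ β)) :
    lzNorm r s B ((Ioi a).indicator (rearr μI f)) ≤
      ENNReal.ofReal (C₁ * a ^ (-η) * C₂) *
        lqNorm s (fun u => ENNReal.ofReal (u ^ (-s.toReal⁻¹) * ell u ^ β)) := by
  have ha0 : 0 < a := one_pos.trans_le ha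
  have hanti : AntitoneOn (fun t : ℝ => ENNReal.ofReal (C₁ * t ^ (-(η + κ)))) (Ioi a) :=
    fun x hx y _ hxy => ENNReal.ofReal_le_ofReal <| mul_le_mul_of_nonneg_left
      (Real.rpow_le_rpow_of_nonpos (ha0.trans hx) hxy (by linarith)) hC₁
  rw [← lqNorm_const_mul hs ENNReal.ofReal_ne_top]
  refine lqNorm_mono s fun u (hu : 0 < u) => ?_
  have := ellA_pos B u
  have := ell_pos u
  calc ENNReal.ofReal (u ^ (r.toReal⁻¹ - s.toReal⁻¹) * ellA B u) *
        rearr μI ((Ioi a).indicator (rearr μI f)) u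
      ≤ ENNReal.ofReal (u ^ (r.toReal⁻¹ - s.toReal⁻¹) * ellA B u) *
        ENNReal.ofReal (C₁ * (a + u) ^ (-(η + κ))) := by
        gcongr
        exact rearr_indicator_Ioi_le hanti hf hu
    _ ≤ ENNReal.ofReal (C₁ * a ^ (-η) * C₂) *
        ENNReal.ofReal (u ^ (-s.toReal⁻¹) * ell u ^ β) := by
        rw [← ENNReal.ofReal_mul (by positivity), ← ENNReal.ofReal_mul' (by positivity)]
        refine ENNReal.ofReal_le_ofReal ?_
        calc u ^ (r.toReal⁻¹ - s.toReal⁻¹) * ellA B u * (C₁ * (a + u) ^ (-(η + κ)))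
            ≤ u ^ (r.toReal⁻¹ - s.toReal⁻¹) * ellA B u * (C₁ * (a ^ (-η) * max 1 u ^ (-κ))) := by
              gcongr
              rw [add_comm]
              exact rpow_neg_add_le hu ha hη hκ
          _ = C₁ * a ^ (-η) * (u ^ (r.toReal⁻¹ - s.toReal⁻¹) * ellA B u * max 1 u ^ (-κ)) := by
              ring
          _ ≤ C₁ * a ^ (-η) * (C₂ * (u ^ (-s.toReal⁻¹) * ell u ^ β)) :=
              mul_le_mul_of_nonneg_left (hw u hu) (by positivity)
          _ = _ := by ring

/-- if `p < r` then the tails are uniformly small: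
`lim_{a→∞} sup_{‖f‖_{L^{p,q,A}} ≤ 1} ‖f^* χ_{(a,∞)}‖_{L^{r,s,B}} = 0`. -/
theorem lz_tail_vanishes_of_lt (p q r s : ℝ≥0∞) (A B : ℝ × ℝ)
    (hA : LZAdmissible p q A) (hB : LZAdmissible r s B) (hpr : p < r) :
    Tendsto (fun a : ℝ =>
        ⨆ (f : ℝ → ℝ≥0∞) (_ : Measurable f) (_ : lzNorm p q A f ≤ 1),
          lzNorm r s B ((Set.Ioi a).indicator fun t => rearr μI f t))
      atTop (nhds 0) := by
  have hp0 : p ≠ 0 := (one_pos.trans_le hA.one_le_left).ne'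
  have hq0 : q ≠ 0 := (one_pos.trans_le hA.one_le_right).ne'
  have hs0 : s ≠ 0 := (one_pos.trans_le hB.one_le_right).ne'
  have hrp : r.toReal⁻¹ < p.toReal⁻¹ := by
    rw [← ENNReal.toReal_inv, ← ENNReal.toReal_inv]
    exact ENNReal.toReal_strict_mono (ENNReal.inv_ne_top.2 hp0) (ENNReal.inv_lt_inv.2 hpr)
  set η := (p.toReal⁻¹ - r.toReal⁻¹) / 3 with hη_def
  have hη : 0 < η := div_pos (sub_pos.2 hrp) three_pos
  obtain ⟨C₁, hC₁, hdecay⟩ :=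
    exists_rearr_le_of_lzNorm_le_one p hq0 A (m := η + (r.toReal⁻¹ + η)) (by linarith)
  obtain ⟨β, C₂, hβ, hweight⟩ := hB.exists_weight_mul_le (κ := r.toReal⁻¹ + η) (by linarith)
  have hbound : Tendsto (fun a : ℝ => ENNReal.ofReal (C₁ * a ^ (-η) * C₂) *
      lqNorm s (fun u => ENNReal.ofReal (u ^ (-s.toReal⁻¹) * ell u ^ β))) atTop (𝓝 0) := by
    have := ENNReal.tendsto_ofReal (((tendsto_rpow_neg_atTop hη).const_mul C₁).mul_const C₂)
    simpa using ENNReal.Tendsto.mul_const this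
      (Or.inr (lqNorm_rpow_mul_ell_rpow_lt_top hs0 hβ).ne)
  refine tendsto_of_tendsto_of_tendsto_of_le_of_le' tendsto_const_nhds hbound
    (Eventually.of_forall fun _ => zero_le) ?_
  filter_upwards [eventually_ge_atTop 2] with a ha
  refine iSup₂_le fun f _ => iSup_le fun hf => ?_
  exact lzNorm_indicator_Ioi_rearr_le hs0 B (by linarith) hη.le (by positivity) hC₁.le
    (fun t ht => hdecay f hf t (ha.trans ht.le)) hweight

end
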